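/- In the formal power series ring ℤ[[t, z_1, …, z_r]], writing z^α = z_1^{m_1}⋯z_r^{m_r} for α = m_1α_1 + ⋯ + m_rα_r in the positive root lattice of D_r, one has ∏_{α ∈ Φ⁺(D_r)} (1 − t·z^{α})·(1 − z^{α})^{-1} = Σ_{T ∈ 𝒯(∞)} (1 − t)^{seg(T)} · z^{−wt(T)}, where Φ⁺(D_r) = {β_{i,k} : 1 ≤ i ≤ k ≤ r−1} ∪ {β_{i,r} : 1 ≤ i ≤ r−1} ∪ {γ_{i,k} : 1 ≤ i < k ≤ r−1} and the right-hand side is a well-defined formal power series because for each monomial only finitely many T ∈ 𝒯(∞) contribute. -/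

import Mathlib

open MvPowerSeries

/-- The variable `t` in `ℤ[[t, z_1, …, z_r]]`. -/
noncomputable def tvar (r : ℕ) : MvPowerSeries (Option (Fin r)) ℤ :=
  MvPowerSeries.X none

/-- The monomial `z^v = z_1^{v 1} ⋯ z_r^{v r}` in `ℤ[[t, z_1, …, z_r]]`. -/
noncomputable def zmon (r : ℕ) (v : Fin r → ℕ) : MvPowerSeries (Option (Fin r)) ℤ :=
  MvPowerSeries.monomial (R := ℤ) (Finsupp.equivFunOnFinite.symm fun o => Option.elim o 0 v) 1

/-- The strict order on the type `D_r` alphabet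
`{1 ≺ ⋯ ≺ r-1 ≺ r, r̄ ≺ \overline{r-1} ≺ ⋯ ≺ 1̄}`, encoded in `{1, …, 2r} ⊂ ℕ`
by `k ↦ k` for `k ≤ r`, `r̄ ↦ r+1`, and `k̄ ↦ 2r+1-k` for `k ≤ r-1`; the
symbols `r` and `r̄` (codes `r` and `r+1`) are incomparable. -/
def dltD (r : ℕ) (a b : ℕ) : Prop := a < b ∧ ¬(a = r ∧ b = r + 1)

/-- The weak order on the type `D_r` alphabet. -/
def dleD (r : ℕ) (a b : ℕ) : Prop := a = b ∨ dltD r a b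

/-- Marginally large semistandard Young tableaux of type `D_r`, on the
partially ordered alphabet above. Conditions: exactly `r-1` rows, rows weakly
increasing, columns strictly increasing, first column `1, …, r-1`, every entry
of row `i` is `≼ ī`, the symbols `r` and `r̄` never appear in the same row, and
the number of `i`-entries in row `i` exceeds the number of boxes in row `i+1`
by exactly one. -/
structure TabD (r : ℕ) where
  row : Fin (r - 1) → List ℕ
  entry_mem : ∀ i : Fin (r - 1), ∀ e ∈ row i, 1 ≤ e ∧ e ≤ 2 * r
  row_weak : ∀ i : Fin (r - 1), (row i).Chain' (dleD r)
  first_col : ∀ i : Fin (r - 1), (row i).head? = some (i.1 + 1)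
  row_bound : ∀ i : Fin (r - 1), ∀ e ∈ row i, dleD r e (2 * r - i.1)
  not_both : ∀ i : Fin (r - 1), ¬(r ∈ row i ∧ (r + 1) ∈ row i)
  col_le : ∀ i : Fin (r - 1), ∀ h : i.1 + 1 < r - 1,
    (row ⟨i.1 + 1, h⟩).length ≤ (row i).length
  col_strict : ∀ i : Fin (r - 1), ∀ h : i.1 + 1 < r - 1,
    ∀ j < (row ⟨i.1 + 1, h⟩).length,
      dltD r ((row i).getD j 0) ((row ⟨i.1 + 1, h⟩).getD j 0)
  marg_large : ∀ i : Fin (r - 1), (row i).count (i.1 + 1) =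
    (if h : i.1 + 1 < r - 1 then (row ⟨i.1 + 1, h⟩).length else 0) + 1

/-- `ℓ_{i,x}(T)`: the number of entries with code `x` in row `i` (row
`i : Fin (r-1)` has label `i+1`; `r̄` has code `r+1` and `k̄` has code `2r+1-k`
for `k ≤ r-1`). -/
def ellD (r : ℕ) (T : TabD r) (i : Fin (r - 1)) (x : ℕ) : ℕ := (T.row i).count x

/-- `seg′(T)`: the number of pairs `(i,x)` with `x ≻ i` and `ℓ_{i,x}(T) > 0`. -/
def segD' (r : ℕ) (T : TabD r) : ℕ :=
  ∑ i : Fin (r - 1),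
    ((Finset.Icc (i.1 + 2) (2 * r)).filter fun x => ellD r T i x ≠ 0).card

/-- `e_D(T)`: the number of rows `i` containing an `ī`-segment but neither an
`r`- nor an `r̄`-segment. -/
def eD (r : ℕ) (T : TabD r) : ℕ :=
  (Finset.univ.filter fun i : Fin (r - 1) =>
    ellD r T i (2 * r - i.1) ≠ 0 ∧ ellD r T i r = 0 ∧ ellD r T i (r + 1) = 0).card

/-- `seg(T) = seg′(T) + e_D(T)`. -/
def segD (r : ℕ) (T : TabD r) : ℕ := segD' r T + eD r T

/-- The positive root `β_{i,k} = α_i + ⋯ + α_k` of `D_r` (`1 ≤ i ≤ k ≤ r-1`),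
in simple-root coordinates. -/
def betaD (r : ℕ) (i k : ℕ) : Fin r → ℕ :=
  fun j => if i ≤ j.1 + 1 ∧ j.1 + 1 ≤ k then 1 else 0

/-- The positive root `β_{i,r} = α_i + ⋯ + α_{r-2} + α_r` of `D_r`
(`1 ≤ i ≤ r-1`), in simple-root coordinates. -/
def betaDr (r : ℕ) (i : ℕ) : Fin r → ℕ :=
  fun j => if i ≤ j.1 + 1 ∧ j.1 + 1 ≤ r - 2 then 1 else if j.1 + 1 = r then 1 else 0

/-- The positive root
`γ_{i,k} = α_i + ⋯ + α_{r-1} + α_r + α_{r-2} + ⋯ + α_k` of `D_r`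
(`1 ≤ i < k ≤ r-1`), in simple-root coordinates. -/
def gammaD (r : ℕ) (i k : ℕ) : Fin r → ℕ :=
  fun j => if i ≤ j.1 + 1 ∧ j.1 + 1 ≤ k - 1 then 1
    else if k ≤ j.1 + 1 ∧ j.1 + 1 ≤ r - 2 then 2
    else if j.1 + 1 = r - 1 ∨ j.1 + 1 = r then 1 else 0

/-- The set of positive roots of `D_r`. -/
def posRootsD (r : ℕ) : Finset (Fin r → ℕ) :=
  ((Finset.Icc 1 (r - 1) ×ˢ Finset.Icc 1 (r - 1)).filter fun p => p.1 ≤ p.2).image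
      (fun p => betaD r p.1 p.2) ∪
    (Finset.Icc 1 (r - 1)).image (fun i => betaDr r i) ∪
    ((Finset.Icc 1 (r - 1) ×ˢ Finset.Icc 1 (r - 1)).filter fun p => p.1 < p.2).image
      (fun p => gammaD r p.1 p.2)

/-- `Ξ(T)`, extended by zero to all vectors: `Ξ(T)(β_{i,k-1}) = ℓ_{i,k}(T)` for
`i < k ≤ r-1`, `Ξ(T)(β_{i,r-1}) = ℓ_{i,r}(T) + ℓ_{i,ī}(T)`,
`Ξ(T)(β_{i,r}) = ℓ_{i,r̄}(T) + ℓ_{i,ī}(T)`, and `Ξ(T)(γ_{i,k}) = ℓ_{i,k̄}(T)`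
for `i < k ≤ r-1`. -/
def XiD (r : ℕ) (T : TabD r) (v : Fin r → ℕ) : ℕ :=
  ∑ i : Fin (r - 1),
    ((∑ k ∈ Finset.Icc (i.1 + 2) (r - 1),
        if v = betaD r (i.1 + 1) (k - 1) then ellD r T i k else 0) +
      (if v = betaD r (i.1 + 1) (r - 1) then
        ellD r T i r + ellD r T i (2 * r - i.1) else 0) +
      (if v = betaDr r (i.1 + 1) then
        ellD r T i (r + 1) + ellD r T i (2 * r - i.1) else 0) +
      (∑ k ∈ Finset.Icc (i.1 + 2) (r - 1),
        if v = gammaD r (i.1 + 1) k then ellD r T i (2 * r + 1 - k) else 0))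

/-- `-wt(T) = Σ_α Ξ(T)(α)·α`, in simple-root coordinates. -/
def negwtD (r : ℕ) (T : TabD r) : Fin r → ℕ :=
  ∑ v ∈ posRootsD r, XiD r T v • v

open Finset

/-!
Expanding `(1 - t z^α) (1 - z^α)⁻¹ = 1 + (1 - t) ∑_{n ≥ 1} z^{nα}` writes the left-hand side as
`∑_c (1 - t)^{#supp c} z^{∑ c(α) α}` over all multiplicity functions `c : Φ⁺ → ℕ`; for a fixed
coefficient only the `c` bounded by its total degree contribute, so it suffices to compute modulo
the monomials that do not divide it.

A marginally large tableau is determined by its counts `ℓ_{i,x}` with `x ≻ i` (the number of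
`i`'s in row `i` is forced by the length of row `i+1`), and these counts are arbitrary subject to
`ℓ_{i,r} ℓ_{i,r̄} = 0`. Attach to the letters `x = k ≤ r`, `r̄`, `k̄` of row `i` the roots
`β_{i,k-1}`, `β_{i,r}`, `γ_{i,k}`, and split `ī` between `β_{i,r-1}` and `β_{i,r}`: then `T ↦ Ξ(T)`
is a bijection onto all multiplicity functions, the `ī`-count being recovered as
`min(Ξ(T)(β_{i,r-1}), Ξ(T)(β_{i,r}))`. Under this bijection `seg(T)` is the size of the support of
`Ξ(T)`: an `ī`-segment in a row without `r` and `r̄` feeds two roots, which is what `e_D` counts.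
-/

theorem one_sub_mul_mul_sub_sum_eq {R : Type*} [CommRing R] (t q G : R) (hG : (1 - q) * G = 1)
    (N : ℕ) :
    (1 - t * q) * G - ∑ n ∈ range (N + 1), (1 - t) ^ (if n ≠ 0 then 1 else 0) * q ^ n
      = (1 - t) * q ^ (N + 1) * G := by
  induction N with
  | zero =>
    rw [sum_range_one, if_neg (not_not.2 rfl)]
    linear_combination hG
  | succ N ih =>
    rw [sum_range_succ, if_pos N.succ_ne_zero, pow_one, ← sub_sub, ih]
    linear_combination (1 - t) * q ^ (N + 1) * hG

theorem sum_Ico_row {M : Type*} [AddCommMonoid M] (f : ℕ → M) {i r : ℕ} (h : i + 2 ≤ r) :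
    ∑ x ∈ Ico (i + 2) (2 * r - i), f x =
      ∑ x ∈ Ico (i + 2) r, f x + f r + f (r + 1) + ∑ k ∈ Ico (i + 2) r, f (2 * r + 1 - k) := by
  have hreflect :
      ∑ k ∈ Ico (i + 2) r, f (2 * r + 1 - k) = ∑ x ∈ Ico (r + 2) (2 * r - i), f x := by
    rw [sum_Ico_reflect f _ (by omega)]
    congr 2 <;> omega
  rw [hreflect, ← sum_Ico_consecutive f h (by omega : r ≤ 2 * r - i),
    ← sum_Ico_consecutive f (by omega : r ≤ r + 2) (by omega : r + 2 ≤ 2 * r - i),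
    sum_Ico_succ_top (by omega), sum_Ico_succ_top le_rfl, Ico_self, sum_empty, zero_add]
  abel

namespace MvPowerSeries

variable {σ R : Type*} [CommRing R]

def lowCoeffIdeal (e : σ →₀ ℕ) : Ideal (MvPowerSeries σ R) where
  carrier := {X | ∀ d ≤ e, coeff d X = 0}
  add_mem' hX hY d hd := by rw [map_add, hX d hd, hY d hd, add_zero]
  zero_mem' d _ := by rw [map_zero]
  smul_mem' Y X hX d hd := by
    classical
    rw [smul_eq_mul, coeff_mul]
    refine sum_eq_zero fun p hp => ?_
    rw [HasAntidiagonal.mem_antidiagonal] at hp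
    rw [hX p.2 ((le_add_self.trans hp.le).trans hd), mul_zero]

theorem monomial_mem_lowCoeffIdeal {e d : σ →₀ ℕ} (h : ¬d ≤ e) (a : R) :
    monomial d a ∈ lowCoeffIdeal e := by
  classical
  intro d' hd'
  rw [coeff_monomial, if_neg]
  rintro rfl
  exact h hd'

theorem coeff_eq_of_sub_mem_lowCoeffIdeal {e : σ →₀ ℕ} {X Y : MvPowerSeries σ R}
    (h : X - Y ∈ lowCoeffIdeal e) : coeff e X = coeff e Y :=
  sub_eq_zero.1 (by rw [← map_sub]; exact h e le_rfl)

theorem not_nsmul_le_of_degree_lt {d e : σ →₀ ℕ} (hd : d ≠ 0) {n : ℕ} (hn : e.degree < n) :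
    ¬n • d ≤ e := by
  obtain ⟨s, hs⟩ := Finsupp.ne_iff.1 hd
  intro h
  have h1 : n • d s ≤ e s := h s
  have h2 := e.le_degree s
  rw [smul_eq_mul] at h1
  have : n ≤ n * d s := Nat.le_mul_of_pos_right n (Nat.pos_of_ne_zero hs)
  omega

theorem one_sub_monomial_mul_invOfUnit {d : σ →₀ ℕ} (hd : d ≠ 0) :
    (1 - monomial d (1 : R)) * invOfUnit (1 - monomial d 1) 1 = 1 := by
  refine mul_invOfUnit _ _ ?_
  rw [map_sub, map_one, ← coeff_zero_eq_constantCoeff_apply, coeff_monomial_ne hd.symm,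
    sub_zero, Units.val_one]

theorem coeff_prod_eq_tsum {ι : Type*} [Fintype ι] [DecidableEq ι] [TopologicalSpace R]
    (t : MvPowerSeries σ R) (d : ι → σ →₀ ℕ) (hd : ∀ a, d a ≠ 0) (e : σ →₀ ℕ) :
    coeff e (∏ a, (1 - t * monomial (d a) 1) * invOfUnit (1 - monomial (d a) 1) 1) =
      ∑' c : ι → ℕ,
        coeff e ((1 - t) ^ #{a | c a ≠ 0} * monomial (∑ a, c a • d a) 1) := by
  set N := e.degree
  set q : ι → MvPowerSeries σ R := fun a => monomial (d a) 1
  set S : ι → MvPowerSeries σ R := fun a =>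
    ∑ n ∈ range (N + 1), (1 - t) ^ (if n ≠ 0 then 1 else 0) * q a ^ n
  have hfactor : ∀ a, (1 - t * q a) * invOfUnit (1 - q a) 1 - S a ∈ lowCoeffIdeal e := by
    intro a
    rw [one_sub_mul_mul_sub_sum_eq _ _ _ (one_sub_monomial_mul_invOfUnit (hd a)),
      monomial_pow, one_pow]
    exact Ideal.mul_mem_right _ _ (Ideal.mul_mem_left _ _ (monomial_mem_lowCoeffIdeal
      (not_nsmul_le_of_degree_lt (hd a) N.lt_succ_self) _))
  have hprod : ∏ a, (1 - t * q a) * invOfUnit (1 - q a) 1 - ∏ a, S a ∈ lowCoeffIdeal e := by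
    rw [← Ideal.Quotient.eq, map_prod, map_prod]
    exact prod_congr rfl fun a _ => Ideal.Quotient.eq.2 (hfactor a)
  have hterm : ∀ c : ι → ℕ,
      ∏ a, (1 - t) ^ (if c a ≠ 0 then 1 else 0) * monomial (d a) (1 : R) ^ c a
        = (1 - t) ^ #{a | c a ≠ 0} * monomial (∑ a, c a • d a) 1 := by
    intro c
    simp only [monomial_pow, one_pow]
    rw [prod_mul_distrib, prod_pow_eq_pow_sum, ← card_filter, prod_monomial, prod_const_one]
  rw [coeff_eq_of_sub_mem_lowCoeffIdeal hprod, prod_univ_sum, map_sum,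
    tsum_eq_sum (s := Fintype.piFinset fun _ => range (N + 1))]
  · exact sum_congr rfl fun c _ => by rw [hterm]
  · intro c hc
    obtain ⟨a, ha⟩ := not_forall.1 (mt Fintype.mem_piFinset.2 hc)
    rw [mem_range, not_lt] at ha
    refine Ideal.mul_mem_left _ _ (monomial_mem_lowCoeffIdeal (fun hle => ?_) _) e le_rfl
    exact not_nsmul_le_of_degree_lt (hd a) ha
      ((single_le_sum (f := fun a => c a • d a) (fun _ _ => zero_le) (mem_univ a)).trans hle)

end MvPowerSeries

-- A cell `(i, x)` is a row `i` (0-based, so labelled `i + 1`) and a letter `i + 1 ≺ x ≺ ī` in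
-- the encoding of `dltD`. `rootD` attaches to it `β_{i+1,k-1}` if `x = k ≤ r`, `β_{i+1,r}` if
-- `x = r̄`, and `γ_{i+1,k}` if `x = k̄`.
def rootCells (r : ℕ) : Finset (Fin (r - 1) × ℕ) :=
  (univ ×ˢ range (2 * r)).filter fun p => p.1.1 + 2 ≤ p.2 ∧ p.2 < 2 * r - p.1.1

theorem mem_rootCells {r : ℕ} {p : Fin (r - 1) × ℕ} :
    p ∈ rootCells r ↔ p.1.1 + 2 ≤ p.2 ∧ p.2 < 2 * r - p.1.1 := by
  simp only [rootCells, mem_filter, mem_product, mem_univ, mem_range, true_and,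
    and_iff_right_iff_imp]
  omega

def rootD (r : ℕ) (p : Fin (r - 1) × ℕ) : Fin r → ℕ :=
  if p.2 ≤ r then betaD r (p.1 + 1) (p.2 - 1)
  else if p.2 = r + 1 then betaDr r (p.1 + 1)
  else gammaD r (p.1 + 1) (2 * r + 1 - p.2)

section RootFamilies

variable {r : ℕ}

theorem betaD_inj {a b a' b' : ℕ} (ha : 1 ≤ a) (hab : a ≤ b) (hb : b < r)
    (ha' : 1 ≤ a') (hab' : a' ≤ b') (hb' : b' < r) (h : betaD r a b = betaD r a' b') :
    a = a' ∧ b = b' := by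
  have e1 := congrFun h ⟨a - 1, by omega⟩
  have e2 := congrFun h ⟨a' - 1, by omega⟩
  have e3 := congrFun h ⟨b - 1, by omega⟩
  have e4 := congrFun h ⟨b' - 1, by omega⟩
  simp only [betaD] at e1 e2 e3 e4
  split_ifs at e1 <;> split_ifs at e2 <;> split_ifs at e3 <;> split_ifs at e4 <;> omega

theorem betaDr_inj {a a' : ℕ} (ha : 1 ≤ a) (ha2 : a < r) (ha' : 1 ≤ a') (ha2' : a' < r)
    (h : betaDr r a = betaDr r a') : a = a' := by
  have e1 := congrFun h ⟨a - 1, by omega⟩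
  have e2 := congrFun h ⟨a' - 1, by omega⟩
  simp only [betaDr] at e1 e2
  split_ifs at e1 <;> split_ifs at e2 <;> omega

theorem gammaD_inj {a k a' k' : ℕ} (ha : 1 ≤ a) (hak : a < k) (hk : k < r)
    (ha' : 1 ≤ a') (hak' : a' < k') (hk' : k' < r) (h : gammaD r a k = gammaD r a' k') :
    a = a' ∧ k = k' := by
  have haa : a = a' := by
    have e1 := congrFun h ⟨a - 1, by omega⟩
    have e2 := congrFun h ⟨a' - 1, by omega⟩
    simp only [gammaD] at e1 e2
    split_ifs at e1 <;> split_ifs at e2 <;> omega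
  subst haa
  have e3 := congrFun h ⟨k - 2, by omega⟩
  have e4 := congrFun h ⟨k' - 2, by omega⟩
  simp only [gammaD] at e3 e4
  refine ⟨rfl, ?_⟩
  split_ifs at e3 <;> split_ifs at e4 <;> omega

end RootFamilies

theorem rootD_injOn {r : ℕ} : Set.InjOn (rootD r) (rootCells r) := by
  rintro ⟨i, x⟩ hp ⟨i', x'⟩ hp' h
  rw [mem_coe, mem_rootCells] at hp hp'
  dsimp only at hp hp'
  have hi := i.2
  have hi' := i'.2
  have hlast := congrFun h ⟨r - 1, by omega⟩
  have hpen := congrFun h ⟨r - 2, by omega⟩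
  unfold rootD at h hlast hpen
  dsimp only at h hlast hpen
  suffices i.1 = i'.1 ∧ x = x' by rw [Fin.ext this.1, this.2]
  -- the coefficients of `α_r` and `α_{r-1}` tell the three families apart
  split_ifs at h hlast hpen
  all_goals first
    | (have := betaD_inj (by omega) (by omega) (by omega) (by omega) (by omega) (by omega) h
       omega)
    | (have := betaDr_inj (by omega) (by omega) (by omega) (by omega) h
       omega)
    | (have := gammaD_inj (by omega) (by omega) (by omega) (by omega) (by omega) (by omega) h
       omega)
    | (simp only [betaD, betaDr, gammaD] at hlast
       split_ifs at hlast <;> omega)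
    | (simp only [betaDr, gammaD] at hpen
       split_ifs at hpen <;> omega)

theorem image_rootD {r : ℕ} : (rootCells r).image (rootD r) = posRootsD r := by
  ext v
  simp only [mem_image, posRootsD, mem_union, mem_filter, mem_product, mem_Icc, Prod.exists,
    mem_rootCells]
  constructor
  · rintro ⟨i, x, ⟨hx, hx'⟩, rfl⟩
    have hi := i.2
    unfold rootD
    split_ifs with h1 h2
    · exact Or.inl (Or.inl ⟨i + 1, x - 1, ⟨⟨⟨by omega, by omega⟩, by omega, by omega⟩, by omega⟩,
        rfl⟩)
    · exact Or.inl (Or.inr ⟨i + 1, ⟨by omega, by omega⟩, rfl⟩)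
    · exact Or.inr ⟨i + 1, 2 * r + 1 - x, ⟨⟨⟨by omega, by omega⟩, by omega, by omega⟩, by omega⟩,
        rfl⟩
  · rintro ((⟨a, b, ⟨⟨⟨ha, ha'⟩, hb, hb'⟩, hab⟩, rfl⟩ | ⟨a, ⟨ha, ha'⟩, rfl⟩) |
      ⟨a, k, ⟨⟨⟨ha, ha'⟩, hk, hk'⟩, hak⟩, rfl⟩)
    · refine ⟨⟨a - 1, by omega⟩, b + 1, ⟨by dsimp only; omega, by dsimp only; omega⟩, ?_⟩
      simp only [rootD, if_pos (show b + 1 ≤ r by omega), Nat.sub_add_cancel ha,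
        Nat.add_sub_cancel]
    · refine ⟨⟨a - 1, by omega⟩, r + 1, ⟨by dsimp only; omega, by dsimp only; omega⟩, ?_⟩
      simp only [rootD, if_neg (show ¬r + 1 ≤ r by omega), if_true, Nat.sub_add_cancel ha]
    · refine ⟨⟨a - 1, by omega⟩, 2 * r + 1 - k,
        ⟨by dsimp only; omega, by dsimp only; omega⟩, ?_⟩
      simp only [rootD, if_neg (show ¬2 * r + 1 - k ≤ r by omega),
        if_neg (show 2 * r + 1 - k ≠ r + 1 by omega), Nat.sub_add_cancel ha,
        Nat.sub_sub_self (show k ≤ 2 * r + 1 by omega)]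

theorem rootD_ne_zero {r : ℕ} {p : Fin (r - 1) × ℕ} (hp : p ∈ rootCells r) : rootD r p ≠ 0 := by
  obtain ⟨⟨i, hi⟩, x⟩ := p
  rw [mem_rootCells] at hp
  dsimp only at hp
  intro h
  by_cases hx : x ≤ r
  · have := congrFun h ⟨i, by omega⟩
    simp only [rootD, if_pos hx, betaD, Pi.zero_apply] at this
    split_ifs at this
    omega
  · have := congrFun h ⟨r - 1, by omega⟩
    simp only [rootD, if_neg hx, Pi.zero_apply] at this
    split_ifs at this <;> simp only [betaDr, gammaD] at this <;> split_ifs at this <;> omega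

def cellCount {r : ℕ} (T : TabD r) (p : Fin (r - 1) × ℕ) : ℕ :=
  ellD r T p.1 p.2 + if p.2 = r ∨ p.2 = r + 1 then ellD r T p.1 (2 * r - p.1) else 0

section CellCount

variable {r : ℕ} (T : TabD r) (i : Fin (r - 1))

theorem cellCount_of_ne {x : ℕ} (hx : x ≠ r) (hx' : x ≠ r + 1) :
    cellCount T (i, x) = ellD r T i x := by
  rw [cellCount, if_neg (not_or.2 ⟨hx, hx'⟩), add_zero]

theorem cellCount_r : cellCount T (i, r) = ellD r T i r + ellD r T i (2 * r - i.1) := by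
  rw [cellCount, if_pos (Or.inl rfl)]

theorem cellCount_r_succ :
    cellCount T (i, r + 1) = ellD r T i (r + 1) + ellD r T i (2 * r - i.1) := by
  rw [cellCount, if_pos (Or.inr rfl)]

end CellCount

theorem XiD_eq_sum_rootCells {r : ℕ} (T : TabD r) (v : Fin r → ℕ) :
    XiD r T v = ∑ p ∈ rootCells r, if v = rootD r p then cellCount T p else 0 := by
  rw [XiD, sum_finset_product (rootCells r) univ (fun i => Ico (i.1 + 2) (2 * r - i.1))
    (fun p => by simp only [mem_rootCells, mem_univ, mem_Ico, true_and])]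
  refine sum_congr rfl fun i _ => ?_
  have hi := i.2
  rw [sum_Ico_row _ (by omega),
    Icc_sub_one_right_eq_Ico_of_not_isMin (not_isMin_of_lt (show 0 < r by omega))]
  congr 1
  · congr 1
    · congr 1
      · refine sum_congr rfl fun x hx => ?_
        rw [mem_Ico] at hx
        simp only [rootD, cellCount, if_pos (by omega : x ≤ r),
          if_neg (by omega : ¬(x = r ∨ x = r + 1)), add_zero]
      · simp only [rootD, cellCount, le_refl, if_true, true_or]
    · simp only [rootD, cellCount, if_neg (by omega : ¬r + 1 ≤ r), if_true, or_true]
  · refine sum_congr rfl fun k hk => ?_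
    rw [mem_Ico] at hk
    simp only [rootD, cellCount, if_neg (by omega : ¬2 * r + 1 - k ≤ r),
      if_neg (by omega : 2 * r + 1 - k ≠ r + 1),
      if_neg (by omega : ¬(2 * r + 1 - k = r ∨ 2 * r + 1 - k = r + 1)), add_zero,
      Nat.sub_sub_self (by omega : k ≤ 2 * r + 1)]

namespace TabD

variable {r : ℕ} (T : TabD r)

theorem pairwise_row (i : Fin (r - 1)) : (T.row i).Pairwise (· ≤ ·) :=
  List.isChain_iff_pairwise.1 ((T.row_weak i).imp fun _ _ h => h.elim le_of_eq fun h => h.1.le)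

theorem mem_row_bounds {i : Fin (r - 1)} {e : ℕ} (he : e ∈ T.row i) :
    i.1 + 1 ≤ e ∧ e ≤ 2 * r - i.1 := by
  refine ⟨?_, (T.row_bound i e he).elim le_of_eq fun h => h.1.le⟩
  have hrow := List.eq_cons_of_mem_head? (T.first_col i)
  have hsorted := T.pairwise_row i
  rw [hrow] at he hsorted
  rcases List.mem_cons.1 he with rfl | he
  · exact le_rfl
  · exact List.rel_of_pairwise_cons hsorted he

theorem ellD_eq_zero {i : Fin (r - 1)} {x : ℕ} (hx : x < i.1 + 1 ∨ 2 * r - i.1 < x) :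
    ellD r T i x = 0 :=
  List.count_eq_zero.2 fun hmem => by have := T.mem_row_bounds hmem; omega

theorem ellD_r_eq_zero_or (i : Fin (r - 1)) : ellD r T i r = 0 ∨ ellD r T i (r + 1) = 0 := by
  by_contra! h
  exact T.not_both i ⟨List.count_pos_iff.1 (Nat.pos_of_ne_zero h.1),
    List.count_pos_iff.1 (Nat.pos_of_ne_zero h.2)⟩

theorem row_eq_of_ellD {T' : TabD r} {i : Fin (r - 1)}
    (hnext : ∀ h : i.1 + 1 < r - 1, T.row ⟨i.1 + 1, h⟩ = T'.row ⟨i.1 + 1, h⟩)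
    (hell : ∀ x, i.1 + 2 ≤ x → ellD r T i x = ellD r T' i x) : T.row i = T'.row i := by
  refine List.Perm.eq_of_pairwise' (T.pairwise_row i) (T'.pairwise_row i)
    (List.perm_iff_count.2 fun x => ?_)
  rcases lt_trichotomy x (i.1 + 1) with hx | rfl | hx
  · exact (T.ellD_eq_zero (Or.inl hx)).trans (T'.ellD_eq_zero (Or.inl hx)).symm
  · rw [T.marg_large, T'.marg_large]
    split_ifs with h
    · rw [hnext h]
    · rfl
  · exact hell x hx

theorem ext_of_ellD {T' : TabD r}
    (h : ∀ i x, i.1 + 2 ≤ x → x ≤ 2 * r - i.1 → ellD r T i x = ellD r T' i x) : T = T' := by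
  have hell : ∀ i x, i.1 + 2 ≤ x → ellD r T i x = ellD r T' i x := fun i x hx => by
    by_cases hx' : x ≤ 2 * r - i.1
    · exact h i x hx hx'
    · rw [T.ellD_eq_zero (Or.inr (by omega)), T'.ellD_eq_zero (Or.inr (by omega))]
  have hrow : ∀ n (i : Fin (r - 1)), r - 2 - i.1 = n → T.row i = T'.row i := by
    intro n
    induction n with
    | zero => exact fun i hi => T.row_eq_of_ellD (fun h => by omega) (hell i)
    | succ n ih =>
      exact fun i hi => T.row_eq_of_ellD (fun h => ih _ (by dsimp only; omega)) (hell i)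
  cases T
  cases T'
  congr
  exact funext fun i => hrow _ i rfl

end TabD

section Construction

variable {r : ℕ} (L : Fin (r - 1) → ℕ → ℕ)

def rowTail (i : Fin (r - 1)) : List ℕ :=
  (∑ x ∈ Ico (i.1 + 2) (2 * r - i.1 + 1), Multiset.replicate (L i x) x).sort (· ≤ ·)

theorem mem_rowTail {i : Fin (r - 1)} {y : ℕ} (hy : y ∈ rowTail L i) :
    i.1 + 2 ≤ y ∧ y ≤ 2 * r - i.1 := by
  rw [rowTail, Multiset.mem_sort, Multiset.mem_sum] at hy
  obtain ⟨x, hx, hy⟩ := hy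
  rw [Multiset.eq_of_mem_replicate hy]
  rw [mem_Ico] at hx
  omega

theorem count_rowTail (i : Fin (r - 1)) {y : ℕ} (hy : i.1 + 2 ≤ y ∧ y ≤ 2 * r - i.1) :
    (rowTail L i).count y = L i y := by
  rw [rowTail, ← Multiset.coe_count, Multiset.sort_eq, Multiset.count_sum',
    sum_eq_single y (fun x _ hxy => by rw [Multiset.count_replicate, if_neg hxy])
      (fun h => absurd (mem_Ico.2 (by omega)) h), Multiset.count_replicate_self]

theorem length_rowTail (i : Fin (r - 1)) :
    (rowTail L i).length = ∑ x ∈ Ico (i.1 + 2) (2 * r - i.1 + 1), L i x := by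
  simp only [rowTail, Multiset.length_sort, Multiset.card_sum, Multiset.card_replicate]

def rowLength (i : ℕ) : ℕ :=
  ∑ j : Fin (r - 1), if i ≤ j.1 then 1 + ∑ x ∈ Ico (j.1 + 2) (2 * r - j.1 + 1), L j x else 0

theorem rowLength_eq_zero {i : ℕ} (hi : r - 1 ≤ i) : rowLength L i = 0 :=
  sum_eq_zero fun j _ => if_neg (by omega)

theorem rowLength_eq (i : Fin (r - 1)) :
    rowLength L i = 1 + (rowTail L i).length + rowLength L (i.1 + 1) := by
  set g : Fin (r - 1) → ℕ := fun j => 1 + ∑ x ∈ Ico (j.1 + 2) (2 * r - j.1 + 1), L j x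
  have hsplit : ∀ j : Fin (r - 1), (if i.1 ≤ j.1 then g j else 0) =
      (if i = j then g j else 0) + if i.1 + 1 ≤ j.1 then g j else 0 := fun j => by
    by_cases hij : i = j
    · subst hij
      rw [if_pos le_rfl, if_pos rfl, if_neg (by omega), add_zero]
    · have : i.1 ≠ j.1 := fun h => hij (Fin.ext h)
      simp only [if_neg hij, zero_add]
      split_ifs <;> omega
  rw [length_rowTail, rowLength, rowLength, sum_congr rfl fun j _ => hsplit j,
    sum_add_distrib, sum_ite_eq, if_pos (mem_univ _), add_assoc]

def rowOfCounts (i : Fin (r - 1)) : List ℕ :=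
  List.replicate (rowLength L (i.1 + 1) + 1) (i.1 + 1) ++ rowTail L i

theorem mem_rowOfCounts {i : Fin (r - 1)} {y : ℕ} (hy : y ∈ rowOfCounts L i) :
    i.1 + 1 ≤ y ∧ y ≤ 2 * r - i.1 := by
  rcases List.mem_append.1 hy with hy | hy
  · rw [List.eq_of_mem_replicate hy]
    omega
  · have := mem_rowTail L hy
    omega

theorem length_rowOfCounts (i : Fin (r - 1)) : (rowOfCounts L i).length = rowLength L i := by
  rw [rowOfCounts, List.length_append, List.length_replicate, rowLength_eq]
  ring

theorem pairwise_rowOfCounts (i : Fin (r - 1)) : (rowOfCounts L i).Pairwise (· ≤ ·) := by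
  refine List.pairwise_append.2 ⟨List.pairwise_replicate.2 (Or.inr le_rfl),
    Multiset.pairwise_sort _ _, fun a ha b hb => ?_⟩
  rw [List.eq_of_mem_replicate ha]
  exact (Nat.le_succ _).trans (mem_rowTail L hb).1

theorem count_rowOfCounts_self (i : Fin (r - 1)) :
    (rowOfCounts L i).count (i.1 + 1) = rowLength L (i.1 + 1) + 1 := by
  rw [rowOfCounts, List.count_append, List.count_replicate_self,
    List.count_eq_zero.2 fun h => by have := mem_rowTail L h; omega, add_zero]

theorem count_rowOfCounts (i : Fin (r - 1)) {y : ℕ} (hy : i.1 + 2 ≤ y ∧ y ≤ 2 * r - i.1) :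
    (rowOfCounts L i).count y = L i y := by
  rw [rowOfCounts, List.count_append, List.count_replicate,
    if_neg (by simp only [beq_iff_eq]; omega), zero_add, count_rowTail L i hy]

theorem getD_rowOfCounts {i : Fin (r - 1)} {p : ℕ} (hp : p ≤ rowLength L (i.1 + 1)) :
    (rowOfCounts L i).getD p 0 = i.1 + 1 := by
  rw [rowOfCounts, List.getD_append _ _ _ _ (by rw [List.length_replicate]; omega),
    List.getD_replicate _ (by omega)]

theorem not_mem_rowOfCounts_both (i : Fin (r - 1)) (hL : L i r = 0 ∨ L i (r + 1) = 0) :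
    ¬(r ∈ rowOfCounts L i ∧ r + 1 ∈ rowOfCounts L i) := by
  rintro ⟨h, h'⟩
  have hi := i.2
  have hc := List.count_pos_iff.2 h
  have hc' := List.count_pos_iff.2 h'
  rw [count_rowOfCounts L i (by omega)] at hc hc'
  omega

def tabOfCounts (hL : ∀ i, L i r = 0 ∨ L i (r + 1) = 0) : TabD r where
  row := rowOfCounts L
  entry_mem i e he := by
    have hb := mem_rowOfCounts L he
    omega
  row_weak i := by
    refine (List.Pairwise.imp_of_mem (fun ha hb hab => ?_) (pairwise_rowOfCounts L i)).isChain
    refine (eq_or_lt_of_le hab).imp_right fun hlt => ⟨hlt, ?_⟩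
    rintro ⟨rfl, rfl⟩
    exact not_mem_rowOfCounts_both L i (hL i) ⟨ha, hb⟩
  first_col i := by rw [rowOfCounts, List.replicate_succ, List.cons_append, List.head?_cons]
  row_bound i e he := by
    have hb := mem_rowOfCounts L he
    have hi := i.2
    refine (eq_or_lt_of_le hb.2).imp_right fun hlt => ⟨hlt, ?_⟩
    omega
  not_both i := not_mem_rowOfCounts_both L i (hL i)
  col_le i h := by
    rw [length_rowOfCounts, length_rowOfCounts, rowLength_eq L i, Fin.val_mk]
    omega
  col_strict i h p hp := by
    rw [length_rowOfCounts] at hp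
    have hmem := mem_rowOfCounts L
      (List.getD_eq_getElem _ 0 (by rw [length_rowOfCounts]; exact hp) ▸ List.getElem_mem _)
    rw [getD_rowOfCounts L hp.le]
    have hi := i.2
    exact ⟨by dsimp only at hmem; omega, by omega⟩
  marg_large i := by
    rw [count_rowOfCounts_self]
    split_ifs with h
    · rw [length_rowOfCounts]
    · rw [rowLength_eq_zero L (by omega)]

theorem ellD_tabOfCounts (hL : ∀ i, L i r = 0 ∨ L i (r + 1) = 0) (i : Fin (r - 1)) {x : ℕ}
    (hx : i.1 + 2 ≤ x ∧ x ≤ 2 * r - i.1) : ellD r (tabOfCounts L hL) i x = L i x :=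
  count_rowOfCounts L i hx

end Construction

section Bijection

variable {r : ℕ}

def cellsExt (c : rootCells r → ℕ) (p : Fin (r - 1) × ℕ) : ℕ :=
  if h : p ∈ rootCells r then c ⟨p, h⟩ else 0

-- The `ī`-count is the common part of the multiplicities of `β_{i+1,r-1}` and `β_{i+1,r}`.
def countsOfCells (c : rootCells r → ℕ) (i : Fin (r - 1)) (x : ℕ) : ℕ :=
  if x = 2 * r - i.1 then min (cellsExt c (i, r)) (cellsExt c (i, r + 1))
  else if x = r ∨ x = r + 1 then
    cellsExt c (i, x) - min (cellsExt c (i, r)) (cellsExt c (i, r + 1))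
  else cellsExt c (i, x)

theorem countsOfCells_r_eq_zero_or (c : rootCells r → ℕ) (i : Fin (r - 1)) :
    countsOfCells c i r = 0 ∨ countsOfCells c i (r + 1) = 0 := by
  have := i.2
  simp only [countsOfCells, if_neg (show r ≠ 2 * r - i.1 by omega),
    if_neg (show r + 1 ≠ 2 * r - i.1 by omega), true_or, or_true, if_true]
  omega

theorem cellCount_tabOfCounts (c : rootCells r → ℕ) (a : rootCells r) :
    cellCount (tabOfCounts (countsOfCells c) (countsOfCells_r_eq_zero_or c)) a = c a := by
  obtain ⟨⟨i, x⟩, ha⟩ := a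
  have hx := mem_rootCells.1 ha
  have hi := i.2
  dsimp only at hx
  show ellD r _ i x + (if x = r ∨ x = r + 1 then ellD r _ i (2 * r - i.1) else 0) = _
  rw [ellD_tabOfCounts _ _ i (by omega), ellD_tabOfCounts _ _ i (by omega),
    show c ⟨(i, x), ha⟩ = cellsExt c (i, x) by rw [cellsExt, dif_pos ha]]
  simp only [countsOfCells, if_neg (show x ≠ 2 * r - i.1 by omega), if_true]
  split_ifs with hxr
  · rcases hxr with rfl | rfl <;> omega
  · rfl

theorem ellD_eq_countsOfCells (T : TabD r) {i : Fin (r - 1)} {x : ℕ}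
    (hx : i.1 + 2 ≤ x ∧ x ≤ 2 * r - i.1) :
    ellD r T i x = countsOfCells (fun a => cellCount T a) i x := by
  have hi := i.2
  have hext : ∀ y, i.1 + 2 ≤ y → y < 2 * r - i.1 →
      cellsExt (fun a => cellCount T a) (i, y) = cellCount T (i, y) :=
    fun y hy hy' => dif_pos (mem_rootCells.2 ⟨hy, hy'⟩)
  have hboth := T.ellD_r_eq_zero_or i
  rw [countsOfCells, hext r (by omega) (by omega), hext (r + 1) (by omega) (by omega),
    cellCount_r, cellCount_r_succ]
  split_ifs with h1 h2
  · subst h1; omega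
  · rcases h2 with h2 | h2 <;> rw [h2, hext _ (by omega) (by omega)]
    · rw [cellCount_r]; omega
    · rw [cellCount_r_succ]; omega
  · rw [hext x (by omega) (by omega), cellCount_of_ne T i (by omega) (by omega)]

noncomputable def tabEquiv : TabD r ≃ (rootCells r → ℕ) :=
  Equiv.ofBijective (fun T a => cellCount T a) ⟨fun T T' h => TabD.ext_of_ellD T
    fun i x hx hx' => by
      rw [ellD_eq_countsOfCells T ⟨hx, hx'⟩, ellD_eq_countsOfCells T' ⟨hx, hx'⟩]
      exact congrArg (countsOfCells · i x) h,
    fun c => ⟨_, funext (cellCount_tabOfCounts c)⟩⟩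

end Bijection

section Transport

variable {r : ℕ} (T : TabD r)

theorem XiD_rootD {p : Fin (r - 1) × ℕ} (hp : p ∈ rootCells r) :
    XiD r T (rootD r p) = cellCount T p := by
  rw [XiD_eq_sum_rootCells, sum_eq_single p
    (fun q hq hqp => if_neg fun h => hqp (rootD_injOn hq hp h.symm)) (absurd hp), if_pos rfl]

theorem negwtD_eq_sum : negwtD r T = ∑ a : rootCells r, cellCount T a • rootD r a := by
  rw [negwtD, ← image_rootD, sum_image rootD_injOn, ← sum_coe_sort]
  exact sum_congr rfl fun a _ => by rw [XiD_rootD T a.2]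

theorem segD_row (i : Fin (r - 1)) :
    ∑ x ∈ Icc (i.1 + 2) (2 * r), (if ellD r T i x ≠ 0 then 1 else 0) +
        (if ellD r T i (2 * r - i.1) ≠ 0 ∧ ellD r T i r = 0 ∧ ellD r T i (r + 1) = 0
          then 1 else 0) =
      ∑ x ∈ Ico (i.1 + 2) (2 * r - i.1), if cellCount T (i, x) ≠ 0 then 1 else 0 := by
  have hi := i.2
  have hIcc : ∑ x ∈ Icc (i.1 + 2) (2 * r), (if ellD r T i x ≠ 0 then 1 else 0) =
      ∑ x ∈ Ico (i.1 + 2) (2 * r - i.1), (if ellD r T i x ≠ 0 then 1 else 0) +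
        if ellD r T i (2 * r - i.1) ≠ 0 then 1 else 0 := by
    rw [← sum_Ico_succ_top (by omega)]
    refine (sum_subset (fun x hx => by rw [mem_Ico] at hx; rw [mem_Icc]; omega)
      fun x hx hx' => ?_).symm
    rw [mem_Icc] at hx
    rw [mem_Ico] at hx'
    rw [T.ellD_eq_zero (Or.inr (by omega)), if_neg (not_not.2 rfl)]
  have hmid : ∀ x ∈ Ico (i.1 + 2) r,
      (if ellD r T i x ≠ 0 then 1 else 0) = if cellCount T (i, x) ≠ 0 then 1 else 0 :=
    fun x hx => by rw [mem_Ico] at hx; rw [cellCount_of_ne T i (by omega) (by omega)]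
  have hrefl : ∀ k ∈ Ico (i.1 + 2) r,
      (if ellD r T i (2 * r + 1 - k) ≠ 0 then 1 else 0) =
        if cellCount T (i, 2 * r + 1 - k) ≠ 0 then 1 else 0 :=
    fun k hk => by rw [mem_Ico] at hk; rw [cellCount_of_ne T i (by omega) (by omega)]
  rw [hIcc, sum_Ico_row _ (by omega), sum_Ico_row _ (by omega), sum_congr rfl hmid,
    sum_congr rfl hrefl, cellCount_r, cellCount_r_succ]
  have hboth := T.ellD_r_eq_zero_or i
  split_ifs <;> omega

theorem segD_eq_card : segD r T = #{a : rootCells r | cellCount T a ≠ 0} := by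
  rw [card_filter, sum_coe_sort (rootCells r) fun p => if cellCount T p ≠ 0 then 1 else 0,
    sum_finset_product (rootCells r) univ (fun i => Ico (i.1 + 2) (2 * r - i.1))
      (fun p => by simp only [mem_rootCells, mem_univ, mem_Ico, true_and]),
    segD, segD', eD, card_filter, ← sum_add_distrib]
  exact sum_congr rfl fun i _ => by rw [card_filter, segD_row]

end Transport

noncomputable def zexp (r : ℕ) : (Fin r → ℕ) →+ (Option (Fin r) →₀ ℕ) where
  toFun v := Finsupp.equivFunOnFinite.symm fun o => Option.elim o 0 v
  map_zero' := by ext o; cases o <;> rfl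
  map_add' v w := by ext o; cases o <;> rfl

theorem zmon_eq_monomial (r : ℕ) (v : Fin r → ℕ) : zmon r v = monomial (zexp r v) 1 := rfl

theorem zexp_ne_zero {r : ℕ} {v : Fin r → ℕ} (hv : v ≠ 0) : zexp r v ≠ 0 := fun h =>
  hv (funext fun j => DFunLike.congr_fun h (some j))

theorem stmt8_general (r : ℕ) :
    ∀ e : Option (Fin r) →₀ ℕ,
      MvPowerSeries.coeff (R := ℤ) e
        (∏ v ∈ posRootsD r, (1 - tvar r * zmon r v) *
          MvPowerSeries.invOfUnit (1 - zmon r v) 1)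
      = ∑' T : TabD r,
          MvPowerSeries.coeff (R := ℤ) e
            ((1 - tvar r) ^ segD r T * zmon r (negwtD r T)) := by
  intro e
  rw [← image_rootD, prod_image rootD_injOn, ← prod_coe_sort]
  refine (MvPowerSeries.coeff_prod_eq_tsum (tvar r) (fun a : rootCells r => zexp r (rootD r a))
    (fun a => zexp_ne_zero (rootD_ne_zero a.2)) e).trans ?_
  rw [← tabEquiv.tsum_eq]
  refine tsum_congr fun T => ?_
  rw [segD_eq_card, negwtD_eq_sum, zmon_eq_monomial, map_sum]
  simp only [map_nsmul]
  rfl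

/-- the Gindikin–Karpelevich formula as a sum over the marginally
large tableaux `𝒯(∞)` of type `D_r`, stated coefficientwise in
`ℤ[[t, z_1, …, z_r]]`. -/
theorem stmt8 (r : ℕ) (hr : 4 ≤ r) :
    ∀ e : Option (Fin r) →₀ ℕ,
      MvPowerSeries.coeff (R := ℤ) e
        (∏ v ∈ posRootsD r, (1 - tvar r * zmon r v) *
          MvPowerSeries.invOfUnit (1 - zmon r v) 1)
      = ∑' T : TabD r,
          MvPowerSeries.coeff (R := ℤ) e
            ((1 - tvar r) ^ segD r T * zmon r (negwtD r T)) :=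
  stmt8_general r
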